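/- arXiv:math/0701285 — 2 statements merged into one kernel-verified Lean document; each statement's English description precedes it below -/
import Mathlib

section
/- Let α > 1 and γ = α^{-1} ∈ (0,1). If κ is an integer with 1 ≤ κ < ⌈α⌉, then ψ^{(κ)} is monotonically increasing on the interval [0, κγ/2]; that is, for all 0 ≤ x ≤ y ≤ κγ/2 one has ψ^{(κ)}(x) ≤ ψ^{(κ)}(y). -/
open scoped BigOperators

noncomputable section

/-- Distance from `x` to the nearest integer. -/
def nint (x : ℝ) : ℝ := |x - round x|

/-- The set of exponents `t` such that `liminf n^t ⟦γ n⟧ = 0`. -/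
def typeSet (γ : ℝ) : Set ℝ :=
  {t : ℝ | Filter.liminf (fun n : ℕ => (n : ℝ) ^ t * nint (γ * n)) Filter.atTop = 0}

/-- An irrational number is of finite type if its type set is bounded above. -/
def IsOfFiniteType (γ : ℝ) : Prop := BddAbove (typeSet γ)

/-- The type of an irrational number. -/
def irrType (γ : ℝ) : ℝ := sSup (typeSet γ)

/-- The Beatty sequence `B_{α,β}`, as a set of positive natural numbers. -/
def BeattySet (α β : ℝ) : Set ℕ :=
  {n : ℕ | 0 < n ∧ ∃ m : ℤ, (n : ℤ) = ⌊α * m + β⌋}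

/-- The 1-periodic function equal to `1` on `(0, γ]` modulo one and `0` elsewhere. -/
def psi (γ : ℝ) (x : ℝ) : ℝ := if 0 < Int.fract x ∧ Int.fract x ≤ γ then 1 else 0

/-- `psiConv γ κ` is the `κ`-fold convolution `ψ^{(κ)}` of `psi γ` with itself. -/
def psiConv (γ : ℝ) : ℕ → ℝ → ℝ
  | 0 => fun _ => 0
  | 1 => psi γ
  | (k + 2) => fun x => ∫ y in (0:ℝ)..1, psiConv γ (k + 1) (x - y) * psi γ y

/-- The singular series `𝔖_κ(N)`. -/
def singularSeries (κ : ℕ) (N : ℕ) : ℝ :=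
  (∏ p ∈ N.primeFactors, (1 + (-1 : ℝ) ^ κ / ((p : ℝ) - 1) ^ (κ - 1))) *
    (∏' p : {p : ℕ // p.Prime ∧ ¬(p ∣ N)}, (1 + (-1 : ℝ) ^ (κ + 1) / (((p : ℕ) : ℝ) - 1) ^ κ))

open Classical in
/-- `G_κ(N) = ∑_{n₁+⋯+n_κ=N, nᵢ ∈ B_{α,β}} Λ(n₁)⋯Λ(n_κ)`. -/
def beattyG (α β : ℝ) (κ N : ℕ) : ℝ :=
  ∑ f ∈ Finset.Nat.antidiagonalTuple κ N,
    ∏ i : Fin κ, (if f i ∈ BeattySet α β then ArithmeticFunction.vonMangoldt (f i) else 0)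

/-- `e(x) = e^{2πix}`. -/
def e (x : ℝ) : ℂ := Complex.exp (2 * Real.pi * Complex.I * x)

/-- The Möbius function, real-valued. -/
def mu (n : ℕ) : ℝ := ((ArithmeticFunction.moebius n : ℤ) : ℝ)

/-!
Since `ψ = 𝟙_{(0,γ]}` on `[0,1]`, convolving with `ψ` is the window integral
`ψ^{(j+1)}(x) = ∫_{x-γ}^{x} ψ^{(j)}(u) du`, whence
`ψ^{(j+1)}(y) - ψ^{(j+1)}(x) = ∫_x^y (ψ^{(j)}(u) - ψ^{(j)}(u-γ)) du`.
By induction on `j`, as long as `jγ < 1` (which `κ < ⌈α⌉` guarantees), `ψ^{(j)}` vanishes on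
`(jγ - 1, 0]`, is a.e. symmetric about `jγ/2` and increases on `[0, jγ/2]`. For
`0 ≤ u ≤ (j+1)γ/2` this gives `ψ^{(j)}(u-γ) ≤ ψ^{(j)}(u)`: either `u - γ` lies in the gap where
`ψ^{(j)}` vanishes, or both points lie in `[0, jγ/2]`, or after reflecting `u` about `jγ/2` they do.
-/

open MeasureTheory Set intervalIntegral

def windowIntegral (γ : ℝ) (f : ℝ → ℝ) (x : ℝ) : ℝ := ∫ u in (x - γ)..x, f u

section WindowIntegral

variable {f : ℝ → ℝ} {γ : ℝ}

theorem continuous_windowIntegral (hf : ∀ a b, IntervalIntegrable f volume a b) :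
    Continuous (windowIntegral γ f) := by
  have hF := intervalIntegral.continuous_primitive hf 0
  have : windowIntegral γ f =
      fun x => (∫ u in (0 : ℝ)..x, f u) - ∫ u in (0 : ℝ)..(x - γ), f u := by
    funext x
    rw [windowIntegral, integral_interval_sub_left (hf 0 x) (hf 0 (x - γ))]
  rw [this]
  exact hF.sub (hF.comp (continuous_id.sub continuous_const))

theorem monotoneOn_windowIntegral (hf : ∀ a b, IntervalIntegrable f volume a b) {a b : ℝ}
    (hle : ∀ᵐ u, u ∈ Icc a b → f (u - γ) ≤ f u) :
    MonotoneOn (windowIntegral γ f) (Icc a b) := by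
  intro x hx y hy hxy
  have hshift : ∫ u in (x - γ)..(y - γ), f u = ∫ u in x..y, f (u - γ) :=
    (integral_comp_sub_right f γ).symm
  have hincr : windowIntegral γ f y - windowIntegral γ f x
      = (∫ u in x..y, f u) - ∫ u in x..y, f (u - γ) := by
    rw [windowIntegral, windowIntegral,
      integral_interval_sub_interval_comm (hf _ _) (hf _ _) (hf _ _),
      integral_symm (x - γ), integral_symm x, hshift]
    ring
  have hmono : ∫ u in x..y, f (u - γ) ≤ ∫ u in x..y, f u := by
    refine integral_mono_ae_restrict hxy ?_ (hf x y) ?_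
    · simpa using (hf (x - γ) (y - γ)).comp_sub_right γ
    · filter_upwards [ae_restrict_of_ae hle, ae_restrict_mem measurableSet_Icc] with u hu hmem
      exact hu ⟨hx.1.trans hmem.1, hmem.2.trans hy.2⟩
  linarith

end WindowIntegral

/-- The shape of `ψ^{(j)}` with `c = jγ`. Of the support `[0, c]` modulo one only the gap
`(c - 1, 0]` to the left of it is recorded, which is all the induction uses. -/
structure IsBump (c : ℝ) (f : ℝ → ℝ) : Prop where
  intervalIntegrable : ∀ a b, IntervalIntegrable f volume a b
  nonneg : ∀ x, 0 ≤ f x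
  eq_zero : ∀ x ∈ Ioc (c - 1) 0, f x = 0
  symm_ae : ∀ᵐ x, f (c - x) = f x
  monotoneOn : MonotoneOn f (Icc 0 (c / 2))

namespace IsBump

variable {f : ℝ → ℝ} {γ c : ℝ}

theorem ae_sub_le (hf : IsBump c f) (hγ0 : 0 ≤ γ) (hγ : c + γ < 1) :
    ∀ᵐ u, u ∈ Icc 0 ((c + γ) / 2) → f (u - γ) ≤ f u := by
  filter_upwards [hf.symm_ae] with u hsymm ⟨hu0, hu⟩
  rcases le_or_gt u γ with huγ | huγ
  · rw [hf.eq_zero (u - γ) ⟨by linarith, by linarith⟩]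
    exact hf.nonneg u
  rcases le_or_gt u (c / 2) with huc | huc
  · exact hf.monotoneOn ⟨by linarith, by linarith⟩ ⟨hu0, huc⟩ (by linarith)
  · rw [← hsymm]
    exact hf.monotoneOn ⟨by linarith, by linarith⟩ ⟨by linarith, by linarith⟩ (by linarith)

theorem windowIntegral (hf : IsBump c f) (hγ0 : 0 ≤ γ) (hγ : c + γ < 1) :
    IsBump (c + γ) (windowIntegral γ f) where
  intervalIntegrable _ _ :=
    (continuous_windowIntegral hf.intervalIntegrable).intervalIntegrable _ _
  nonneg x := integral_nonneg (by linarith) fun u _ => hf.nonneg u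
  eq_zero x hx := by
    have hzero : EqOn f 0 (uIcc (x - γ) x) := by
      intro u hu
      rw [uIcc_of_le (by linarith)] at hu
      exact hf.eq_zero u ⟨by linarith [hx.1, hu.1], hu.2.trans hx.2⟩
    rw [_root_.windowIntegral, integral_congr hzero]
    exact intervalIntegral.integral_zero
  symm_ae := ae_of_all _ fun x => by
    rw [_root_.windowIntegral, _root_.windowIntegral, show c + γ - x - γ = c - x by ring,
      show c + γ - x = c - (x - γ) by ring, ← integral_comp_sub_left f c]
    exact integral_congr_ae (hf.symm_ae.mono fun u hu _ => hu)
  monotoneOn := monotoneOn_windowIntegral hf.intervalIntegrable (hf.ae_sub_le hγ0 hγ)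

end IsBump

section Psi

variable {γ : ℝ}

theorem psi_nonneg (γ x : ℝ) : 0 ≤ psi γ x := by
  unfold psi; split <;> norm_num

theorem psi_add_intCast (γ x : ℝ) (n : ℤ) : psi γ (x + n) = psi γ x := by
  simp only [psi, Int.fract_add_intCast]

theorem psi_eq_indicator (hγ0 : 0 ≤ γ) (hγ1 : γ < 1) {x : ℝ} (hx : x ∈ Ioc (γ - 1) 1) :
    psi γ x = (Ioc 0 γ).indicator 1 x := by
  obtain ⟨hx1, hx2⟩ := hx
  rcases lt_trichotomy x 0 with hneg | rfl | hpos
  · have hfract : Int.fract x = x + 1 := by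
      rw [← Int.fract_add_one]
      exact Int.fract_eq_self.mpr ⟨by linarith, by linarith⟩
    rw [psi, hfract, if_neg (by intro h; linarith [h.2]),
      indicator_of_notMem (fun h => by linarith [h.1])]
  · simp [psi]
  rcases hx2.lt_or_eq with hlt | rfl
  · have hfract : Int.fract x = x := Int.fract_eq_self.mpr ⟨hpos.le, hlt⟩
    simp only [psi, hfract, indicator, mem_Ioc, Pi.one_apply]
  · simp [psi, hγ1.not_ge]

theorem ae_fract_ne (c : ℝ) : ∀ᵐ x : ℝ, Int.fract x ≠ c := by
  have hsub : {x : ℝ | ¬Int.fract x ≠ c} ⊆ range fun n : ℤ => c + n := by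
    intro x hx
    obtain hx : Int.fract x = c := not_not.mp hx
    exact ⟨⌊x⌋, show c + ⌊x⌋ = x by rw [← hx, Int.fract_add_floor]⟩
  exact ae_iff.mpr (measure_mono_null hsub ((countable_range _).measure_zero _))

theorem psi_self_sub_ae (hγ0 : 0 ≤ γ) (hγ1 : γ < 1) : ∀ᵐ x, psi γ (γ - x) = psi γ x := by
  filter_upwards [ae_fract_ne 0, ae_fract_ne γ] with x hx0 hxγ
  have ht0 : 0 < Int.fract x := (Int.fract_nonneg x).lt_of_ne' hx0
  have ht1 : Int.fract x < 1 := Int.fract_lt_one x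
  have hx : psi γ x = psi γ (Int.fract x) := by
    rw [← psi_add_intCast γ (Int.fract x) ⌊x⌋, Int.fract_add_floor]
  have hγx : psi γ (γ - x) = psi γ (γ - Int.fract x) := by
    rw [← psi_add_intCast γ (γ - x) ⌊x⌋]
    congr 1
    unfold Int.fract
    ring
  rw [hx, hγx, psi_eq_indicator hγ0 hγ1 ⟨by linarith, by linarith⟩,
    psi_eq_indicator hγ0 hγ1 ⟨by linarith, by linarith⟩]
  rcases hxγ.lt_or_gt with hlt | hgt
  · rw [indicator_of_mem (show γ - Int.fract x ∈ Ioc 0 γ from ⟨by linarith, by linarith⟩),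
      indicator_of_mem (show Int.fract x ∈ Ioc 0 γ from ⟨ht0, hlt.le⟩)]
    rfl
  · rw [indicator_of_notMem (fun h => by linarith [h.1]),
      indicator_of_notMem (fun h => by linarith [h.2])]

theorem intervalIntegrable_psi (γ a b : ℝ) : IntervalIntegrable (psi γ) volume a b := by
  refine (intervalIntegrable_const (c := (1 : ℝ))).mono_fun' ?_ (ae_of_all _ fun x => ?_)
  · exact (Measurable.ite ((measurableSet_lt measurable_const measurable_fract).inter
      (measurableSet_le measurable_fract measurable_const)) measurable_const
      measurable_const).aestronglyMeasurable
  · show ‖psi γ x‖ ≤ 1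
    unfold psi; split <;> norm_num

theorem isBump_psi (hγ0 : 0 ≤ γ) (hγ1 : γ < 1) : IsBump γ (psi γ) where
  intervalIntegrable := intervalIntegrable_psi γ
  nonneg := psi_nonneg γ
  eq_zero x hx := by
    rw [psi_eq_indicator hγ0 hγ1 ⟨hx.1, by linarith [hx.2]⟩,
      indicator_of_notMem fun h => (h.1.trans_le hx.2).false]
  symm_ae := psi_self_sub_ae hγ0 hγ1
  monotoneOn x hx y hy hxy := by
    rw [psi_eq_indicator hγ0 hγ1 ⟨by linarith [hx.1], by linarith [hx.2]⟩,
      psi_eq_indicator hγ0 hγ1 ⟨by linarith [hy.1], by linarith [hy.2]⟩]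
    rcases hx.1.eq_or_lt with rfl | hx0
    · rw [indicator_of_notMem fun h => h.1.false]
      exact indicator_nonneg (fun _ _ => zero_le_one' ℝ) y
    · rw [indicator_of_mem (show x ∈ Ioc 0 γ from ⟨hx0, by linarith [hx.2]⟩),
        indicator_of_mem (show y ∈ Ioc 0 γ from ⟨hx0.trans_le hxy, by linarith [hy.2]⟩)]
      rfl

theorem intervalIntegral_comp_sub_mul_psi (f : ℝ → ℝ) (hγ0 : 0 ≤ γ) (hγ1 : γ < 1) (x : ℝ) :
    ∫ y in (0 : ℝ)..1, f (x - y) * psi γ y = ∫ u in (x - γ)..x, f u := by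
  have hind : EqOn (fun y => f (x - y) * psi γ y) ((Ioc 0 γ).indicator fun y => f (x - y))
      (uIcc 0 1) := by
    intro y hy
    rw [uIcc_of_le zero_le_one] at hy
    simp only [psi_eq_indicator hγ0 hγ1 ⟨by linarith [hy.1], hy.2⟩, indicator, Pi.one_apply]
    split_ifs <;> simp
  rw [integral_congr hind, integral_of_le zero_le_one, setIntegral_indicator measurableSet_Ioc,
    inter_eq_right.mpr (Ioc_subset_Ioc_right hγ1.le), ← integral_of_le hγ0,
    integral_comp_sub_left fun u => f u, sub_zero]

end Psi

theorem psiConv_succ_eq_windowIntegral {γ : ℝ} (hγ0 : 0 ≤ γ) (hγ1 : γ < 1) {j : ℕ}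
    (hj : 1 ≤ j) : psiConv γ (j + 1) = windowIntegral γ (psiConv γ j) := by
  obtain ⟨k, rfl⟩ := Nat.exists_eq_add_of_le' hj
  funext x
  exact intervalIntegral_comp_sub_mul_psi _ hγ0 hγ1 x

theorem isBump_psiConv {γ : ℝ} (hγ0 : 0 ≤ γ) {j : ℕ} (hj : 1 ≤ j) (hjγ : j * γ < 1) :
    IsBump (j * γ) (psiConv γ j) := by
  induction j, hj using Nat.le_induction with
  | base =>
    rw [Nat.cast_one, one_mul] at hjγ ⊢
    exact isBump_psi hγ0 hjγ
  | succ j hj ih =>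
    have hsucc : ((j + 1 : ℕ) : ℝ) * γ = j * γ + γ := by push_cast; ring
    have hjγ0 : 0 ≤ (j : ℝ) * γ := by positivity
    rw [hsucc] at hjγ ⊢
    rw [psiConv_succ_eq_windowIntegral hγ0 (by linarith) hj]
    exact (ih (by linarith)).windowIntegral hγ0 hjγ

theorem statement18 (α : ℝ) (hα : 1 < α) (κ : ℕ) (hκ₁ : 1 ≤ κ) (hκ₂ : κ < ⌈α⌉₊)
    (x y : ℝ) (hx : 0 ≤ x) (hxy : x ≤ y) (hy : y ≤ (κ : ℝ) * α⁻¹ / 2) :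
    psiConv α⁻¹ κ x ≤ psiConv α⁻¹ κ y := by
  have hα0 : 0 < α := by linarith
  have hκγ : (κ : ℝ) * α⁻¹ < 1 := (mul_inv_lt_iff₀ hα0).mpr (by simpa using Nat.lt_ceil.mp hκ₂)
  exact (isBump_psiConv (inv_nonneg.mpr hα0.le) hκ₁ hκγ).monotoneOn
    ⟨hx, hxy.trans hy⟩ ⟨hx.trans hxy, hy⟩ hxy

end
end

section
/- Let α > 1 be irrational, γ = α^{-1} ∈ (0,1), and κ = ⌈α⌉ (the least integer ≥ α). Then the lower bound ψ^{(κ)}(x) ≥ (κγ − 1)^{κ−1} / (2^{κ−2} (κ−1)!) holds uniformly for all x ∈ ℝ, and this bound is sharp: equality holds at x = (κγ − 1)/2. -/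
open scoped BigOperators

noncomputable section

/-! Write `f_k = boxConv γ k` for the `(k+1)`-fold convolution of the indicator of `(0, γ]` on `ℝ`,
so that `f_{k+1}(x) = ∫_{x-γ}^x f_k`. Since `f_k` is supported in `(0, (k+1)γ]` and `(k+1)γ < 2`
for `k < κ`, periodizing gives `ψ^{(k+1)}(x) = f_k(t) + f_k(t+1)` with `t = {x}`. Each `f_{k+1}`
equals `x^{k+1}/(k+1)!` on `[0, γ]`, is symmetric about `(k+2)γ/2` and increases to the left of it.

Put `κ = K + 2` and `δ = κγ - 1 ∈ [0, γ)`. For `t ≤ δ` symmetry turns `f_{K+1}(t+1)` into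
`(δ-t)^{K+1}/(K+1)!`, and the power mean inequality `t^n + (δ-t)^n ≥ 2 (δ/2)^n` gives the bound,
with equality at `t = δ/2`. For `δ < t < 1` only `f_{K+1}(t)` survives, and unimodality bounds it
below by `f_{K+1}(δ) = δ^{K+1}/(K+1)!`. -/

open MeasureTheory Set

def movingIntegral (γ : ℝ) (g : ℝ → ℝ) (x : ℝ) : ℝ := ∫ u in (x - γ)..x, g u

section movingIntegral

variable {γ : ℝ} {g : ℝ → ℝ}

lemma movingIntegral_eq_integral_comp_sub (γ : ℝ) (g : ℝ → ℝ) (x : ℝ) :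
    movingIntegral γ g x = ∫ y in (0 : ℝ)..γ, g (x - y) := by
  simp [movingIntegral, intervalIntegral.integral_comp_sub_left]

lemma continuous_movingIntegral (hg : ∀ a b, IntervalIntegrable g volume a b) :
    Continuous (movingIntegral γ g) := by
  have hF := intervalIntegral.continuous_primitive hg 0
  have : movingIntegral γ g = fun x => (∫ u in (0 : ℝ)..x, g u) - ∫ u in (0 : ℝ)..(x - γ), g u := by
    ext x
    exact (intervalIntegral.integral_interval_sub_left (hg 0 x) (hg 0 (x - γ))).symm
  rw [this]
  exact hF.sub (hF.comp (continuous_id.sub continuous_const))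

lemma movingIntegral_nonneg (hγ : 0 ≤ γ) (hg : ∀ u, 0 ≤ g u) (x : ℝ) :
    0 ≤ movingIntegral γ g x :=
  intervalIntegral.integral_nonneg (by linarith) fun u _ => hg u

lemma movingIntegral_eq_zero (hγ : 0 ≤ γ) {x : ℝ} (hg : ∀ u ∈ Icc (x - γ) x, g u = 0) :
    movingIntegral γ g x = 0 := by
  rw [movingIntegral, intervalIntegral.integral_congr (g := fun _ => (0 : ℝ)),
    intervalIntegral.integral_zero]
  rwa [uIcc_of_le (by linarith)]

lemma movingIntegral_eq_integral_of_le (hg0 : ∀ u ≤ 0, g u = 0)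
    (hg : ∀ a b, IntervalIntegrable g volume a b) {x : ℝ} (hx : x ≤ γ) :
    movingIntegral γ g x = ∫ u in (0 : ℝ)..x, g u := by
  have hleft : ∫ u in (x - γ)..0, g u = 0 := by
    rw [intervalIntegral.integral_congr (g := fun _ => (0 : ℝ)), intervalIntegral.integral_zero]
    intro u hu
    rw [uIcc_of_le (by linarith)] at hu
    exact hg0 u hu.2
  rw [movingIntegral, ← intervalIntegral.integral_add_adjacent_intervals (hg _ 0) (hg 0 x),
    hleft, zero_add]

lemma movingIntegral_comp_sub {c : ℝ} (hg : ∀ᵐ v, g (c - v) = g v) (x : ℝ) :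
    movingIntegral γ g (c + γ - x) = movingIntegral γ g x := by
  have hsub : ∫ v in (x - γ)..x, g (c - v) = movingIntegral γ g (c + γ - x) := by
    rw [intervalIntegral.integral_comp_sub_left, movingIntegral]
    congr 1 <;> ring
  rw [← hsub, movingIntegral]
  exact intervalIntegral.integral_congr_ae (hg.mono fun v hv _ => hv)

lemma monotoneOn_movingIntegral (hg : ∀ a b, IntervalIntegrable g volume a b) {M : ℝ}
    (hshift : ∀ u ≤ M, g (u - γ) ≤ g u) :
    MonotoneOn (movingIntegral γ g) (Iic M) := by
  intro a _ b hb hab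
  have hdiff : movingIntegral γ g b - movingIntegral γ g a =
      (∫ u in a..b, g u) - ∫ u in a..b, g (u - γ) := by
    rw [movingIntegral, movingIntegral, intervalIntegral.integral_interval_sub_interval_comm'
      (hg _ _) (hg _ _) (hg _ _), intervalIntegral.integral_comp_sub_right]
  have hle : ∫ u in a..b, g (u - γ) ≤ ∫ u in a..b, g u :=
    intervalIntegral.integral_mono_on hab (by simpa using (hg (a - γ) (b - γ)).comp_sub_right γ)
      (hg a b) fun u hu => hshift u (hu.2.trans hb)
  linarith

end movingIntegral

lemma le_of_symmetric_of_monotoneOn {f : ℝ → ℝ} {L s t : ℝ} (hsymm : ∀ x, f (L - x) = f x)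
    (hmono : MonotoneOn f (Iic (L / 2))) (hst : s ≤ t) (hts : t ≤ L - s) : f s ≤ f t := by
  rcases le_total t (L / 2) with ht | ht
  · exact hmono (mem_Iic.2 (by linarith)) (mem_Iic.2 ht) hst
  · rw [← hsymm t]
    exact hmono (mem_Iic.2 (by linarith)) (mem_Iic.2 (by linarith)) (by linarith)

def boxConv (γ : ℝ) : ℕ → ℝ → ℝ
  | 0 => (Ioc 0 γ).indicator 1
  | k + 1 => movingIntegral γ (boxConv γ k)

lemma boxConv_succ (γ : ℝ) (k : ℕ) : boxConv γ (k + 1) = movingIntegral γ (boxConv γ k) := rfl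

namespace boxConv

variable {γ : ℝ}

lemma intervalIntegrable (k : ℕ) (a b : ℝ) : IntervalIntegrable (boxConv γ k) volume a b := by
  cases k with
  | zero =>
    exact ((integrable_indicator_iff measurableSet_Ioc).2
      (integrableOn_const measure_Ioc_lt_top.ne)).intervalIntegrable
  | succ k =>
    exact (continuous_movingIntegral (intervalIntegrable k)).intervalIntegrable a b

lemma nonneg (hγ : 0 ≤ γ) (k : ℕ) (x : ℝ) : 0 ≤ boxConv γ k x := by
  induction k generalizing x with
  | zero => exact indicator_nonneg (fun _ _ => zero_le_one) x
  | succ k ih => exact movingIntegral_nonneg hγ ih x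

lemma eq_zero_of_nonpos (hγ : 0 ≤ γ) (k : ℕ) {x : ℝ} (hx : x ≤ 0) : boxConv γ k x = 0 := by
  induction k generalizing x with
  | zero => exact indicator_of_notMem (fun h => (not_lt.2 hx) h.1) _
  | succ k ih => exact movingIntegral_eq_zero hγ fun u hu => ih (hu.2.trans hx)

lemma eq_zero_of_lt (hγ : 0 ≤ γ) (k : ℕ) {x : ℝ} (hx : (k + 1) * γ < x) : boxConv γ k x = 0 := by
  induction k generalizing x with
  | zero => exact indicator_of_notMem (fun h => (not_le.2 (by simpa using hx)) h.2) _
  | succ k ih =>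
    exact movingIntegral_eq_zero hγ fun u hu => ih (by push_cast at hx; linarith [hu.1])

lemma succ_eq_pow (hγ : 0 ≤ γ) (k : ℕ) {x : ℝ} (hx0 : 0 ≤ x) (hxγ : x ≤ γ) :
    boxConv γ (k + 1) x = x ^ (k + 1) / (k + 1).factorial := by
  induction k generalizing x with
  | zero =>
    have hone : ∀ᵐ u, u ∈ uIoc 0 x → boxConv γ 0 u = 1 := .of_forall fun u hu => by
      rw [uIoc_of_le hx0] at hu
      exact indicator_of_mem (show u ∈ Ioc 0 γ from ⟨hu.1, hu.2.trans hxγ⟩) _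
    rw [boxConv_succ, movingIntegral_eq_integral_of_le (fun _ => eq_zero_of_nonpos hγ 0)
      (intervalIntegrable 0) hxγ, intervalIntegral.integral_congr_ae hone]
    simp
  | succ k ih =>
    rw [boxConv_succ, movingIntegral_eq_integral_of_le (fun _ => eq_zero_of_nonpos hγ _)
      (intervalIntegrable _) hxγ, intervalIntegral.integral_congr (g := fun u =>
        u ^ (k + 1) / (k + 1).factorial) fun u hu => ?_]
    · rw [intervalIntegral.integral_div, integral_pow, Nat.factorial_succ (k + 1)]
      push_cast
      field_simp
      ring
    · rw [uIcc_of_le hx0] at hu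
      exact ih hu.1 (hu.2.trans hxγ)

lemma ae_comp_sub_eq (k : ℕ) :
    ∀ᵐ x, boxConv γ k (((k : ℝ) + 1) * γ - x) = boxConv γ k x := by
  induction k with
  | zero =>
    filter_upwards [(countable_singleton 0 |>.insert γ).ae_notMem volume] with v hv
    have hiff : γ - v ∈ Ioc 0 γ ↔ v ∈ Ioc 0 γ := by
      simp only [mem_insert_iff, mem_singleton_iff, not_or] at hv
      constructor <;> rintro ⟨h0, h1⟩
      · exact ⟨lt_of_le_of_ne (by linarith) (Ne.symm hv.2), by linarith⟩
      · exact ⟨by linarith [lt_of_le_of_ne h1 hv.1], by linarith⟩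
    simp only [boxConv, CharP.cast_eq_zero, zero_add, one_mul, indicator_apply, hiff, Pi.one_apply]
  | succ k ih =>
    refine .of_forall fun x => ?_
    rw [show ((k + 1 : ℕ) + 1 : ℝ) * γ - x = ((k : ℝ) + 1) * γ + γ - x by push_cast; ring]
    exact movingIntegral_comp_sub ih x

lemma succ_comp_sub (k : ℕ) (x : ℝ) :
    boxConv γ (k + 1) (((k : ℝ) + 2) * γ - x) = boxConv γ (k + 1) x := by
  rw [show ((k : ℝ) + 2) * γ - x = ((k : ℝ) + 1) * γ + γ - x by ring]
  exact movingIntegral_comp_sub (ae_comp_sub_eq k) x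

lemma apply_sub_le (hγ : 0 ≤ γ) (k : ℕ) {u : ℝ} (hu : u ≤ ((k : ℝ) + 2) * γ / 2) :
    boxConv γ k (u - γ) ≤ boxConv γ k u := by
  induction k generalizing u with
  | zero =>
    rw [eq_zero_of_nonpos hγ 0 (by push_cast at hu; linarith)]
    exact nonneg hγ 0 u
  | succ k ih =>
    push_cast at hu
    exact le_of_symmetric_of_monotoneOn (succ_comp_sub k)
      (monotoneOn_movingIntegral (intervalIntegrable k) fun _ => ih) (by linarith) (by linarith)

lemma succ_le_of_le_of_le_sub (hγ : 0 ≤ γ) (k : ℕ) {s t : ℝ} (hst : s ≤ t)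
    (hts : t ≤ ((k : ℝ) + 2) * γ - s) : boxConv γ (k + 1) s ≤ boxConv γ (k + 1) t :=
  le_of_symmetric_of_monotoneOn (succ_comp_sub k)
    (monotoneOn_movingIntegral (intervalIntegrable k) fun _ => apply_sub_le hγ k) hst hts

variable {δ : ℝ} {K : ℕ}

lemma add_shift_one_eq (hγ : 0 ≤ γ) (hL : ((K : ℝ) + 2) * γ = 1 + δ) (hδγ : δ ≤ γ) {t : ℝ}
    (ht0 : 0 ≤ t) (htδ : t ≤ δ) :
    boxConv γ (K + 1) t + boxConv γ (K + 1) (t + 1) =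
      (t ^ (K + 1) + (δ - t) ^ (K + 1)) / (K + 1).factorial := by
  rw [← succ_comp_sub K (t + 1), show ((K : ℝ) + 2) * γ - (t + 1) = δ - t by linarith,
    succ_eq_pow hγ K ht0 (by linarith), succ_eq_pow hγ K (by linarith) (by linarith), add_div]

lemma le_add_shift_one (hγ : 0 ≤ γ) (hL : ((K : ℝ) + 2) * γ = 1 + δ) (hδ0 : 0 ≤ δ)
    (hδγ : δ ≤ γ) {t : ℝ} (ht0 : 0 ≤ t) (ht1 : t ≤ 1) :
    δ ^ (K + 1) / (2 ^ K * (K + 1).factorial) ≤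
      boxConv γ (K + 1) t + boxConv γ (K + 1) (t + 1) := by
  rcases le_or_gt t δ with htδ | hδt
  · have hpow := add_pow_le ht0 (sub_nonneg.2 htδ) (K + 1)
    rw [add_sub_cancel, Nat.add_sub_cancel] at hpow
    rw [add_shift_one_eq hγ hL hδγ ht0 htδ, ← div_div]
    gcongr
    rwa [div_le_iff₀' (by positivity)]
  · calc δ ^ (K + 1) / (2 ^ K * (K + 1).factorial)
        ≤ δ ^ (K + 1) / (K + 1).factorial :=
          div_le_div_of_nonneg_left (by positivity) (by positivity)
            (le_mul_of_one_le_left (by positivity) (one_le_pow₀ one_le_two))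
      _ = boxConv γ (K + 1) δ := (succ_eq_pow hγ K hδ0 hδγ).symm
      _ ≤ boxConv γ (K + 1) t := succ_le_of_le_of_le_sub hγ K hδt.le (by linarith)
      _ = boxConv γ (K + 1) t + boxConv γ (K + 1) (t + 1) := by
          rw [eq_zero_of_lt hγ (K + 1) (x := t + 1) (by push_cast; linarith), add_zero]

end boxConv

lemma psiConv_add_two {γ : ℝ} (hγ0 : 0 ≤ γ) (hγ1 : γ < 1) (m : ℕ) (x : ℝ) :
    psiConv γ (m + 2) x = ∫ y in (0 : ℝ)..γ, psiConv γ (m + 1) (x - y) := by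
  change ∫ y in (0 : ℝ)..1, psiConv γ (m + 1) (x - y) * psi γ y = _
  rw [intervalIntegral.integral_of_le zero_le_one, intervalIntegral.integral_of_le hγ0,
    setIntegral_congr_fun measurableSet_Ioc
      (g := (Ioc 0 γ).indicator fun y => psiConv γ (m + 1) (x - y)),
    setIntegral_indicator measurableSet_Ioc, Ioc_inter_Ioc, max_self, min_eq_right hγ1.le]
  intro y hy
  rcases hy.2.lt_or_eq with h | rfl
  · simp [psi, indicator_apply, Int.fract_eq_self.2 ⟨hy.1.le, h⟩]
  · simp [psi, hγ1.not_ge]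

lemma fract_sub_of_le {x y : ℝ} (hy0 : 0 ≤ y) (hy : y ≤ Int.fract x) :
    Int.fract (x - y) = Int.fract x - y :=
  Int.fract_eq_iff.2 ⟨by linarith, by linarith [Int.fract_lt_one x], ⌊x⌋, by
    rw [Int.fract]; ring⟩

lemma fract_sub_of_lt {x y : ℝ} (hy1 : y ≤ 1) (hy : Int.fract x < y) :
    Int.fract (x - y) = Int.fract x - y + 1 :=
  Int.fract_eq_iff.2 ⟨by linarith [Int.fract_nonneg x], by linarith, ⌊x⌋ - 1, by
    rw [Int.fract]; push_cast; ring⟩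

lemma psiConv_succ_eq {γ : ℝ} (hγ0 : 0 ≤ γ) (hγ1 : γ < 1) (m : ℕ)
    (hm : ((m : ℝ) + 1) * γ < 2) (x : ℝ) :
    psiConv γ (m + 1) x = boxConv γ m (Int.fract x) + boxConv γ m (Int.fract x + 1) := by
  induction m generalizing x with
  | zero =>
    have hout : (((0 : ℕ) : ℝ) + 1) * γ < Int.fract x + 1 := by
      push_cast; linarith [Int.fract_nonneg x]
    rw [boxConv.eq_zero_of_lt hγ0 0 hout, add_zero]
    simp [psiConv, psi, boxConv, indicator_apply]
  | succ m ih =>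
    push_cast at hm
    set t := Int.fract x
    have hint (c : ℝ) : IntervalIntegrable (fun y => boxConv γ m (c - y)) volume 0 γ := by
      simpa using (boxConv.intervalIntegrable m c (c - γ)).comp_sub_left c
    rw [psiConv_add_two hγ0 hγ1, boxConv_succ, movingIntegral_eq_integral_comp_sub,
      movingIntegral_eq_integral_comp_sub, ← intervalIntegral.integral_add (hint t) (hint _)]
    refine intervalIntegral.integral_congr fun y hy => ?_
    rw [uIcc_of_le hγ0] at hy
    rw [ih (by nlinarith) (x - y)]
    rcases le_or_gt y t with h | h
    · rw [fract_sub_of_le hy.1 h, sub_add_eq_add_sub]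
    · rw [fract_sub_of_lt (by linarith [hy.2]) h,
        boxConv.eq_zero_of_nonpos hγ0 m (x := t - y) (by linarith),
        boxConv.eq_zero_of_lt hγ0 m (x := t - y + 1 + 1)
          (by nlinarith [Int.fract_nonneg x, hy.2]),
        zero_add, add_zero, sub_add_eq_add_sub]

theorem statement19_general (α : ℝ) (hα : 1 < α)
    (κ : ℕ) (hκ : κ = ⌈α⌉₊) :
    (∀ x : ℝ,
      ((κ : ℝ) * α⁻¹ - 1) ^ (κ - 1) / (2 ^ (κ - 2) * (Nat.factorial (κ - 1) : ℝ)) ≤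
        psiConv α⁻¹ κ x) ∧
    psiConv α⁻¹ κ (((κ : ℝ) * α⁻¹ - 1) / 2) =
      ((κ : ℝ) * α⁻¹ - 1) ^ (κ - 1) / (2 ^ (κ - 2) * (Nat.factorial (κ - 1) : ℝ)) := by
  have hα0 : 0 < α := by linarith
  have hακ : α ≤ κ := hκ ▸ Nat.le_ceil α
  have hκα : (κ : ℝ) < α + 1 := hκ ▸ Nat.ceil_lt_add_one hα0.le
  obtain ⟨K, rfl⟩ : ∃ K, κ = K + 2 := ⟨κ - 2, by
    have : 1 < κ := by exact_mod_cast hα.trans_le hακ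
    omega⟩
  set γ := α⁻¹
  set δ := ((K + 2 : ℕ) : ℝ) * γ - 1 with hδ
  push_cast at hακ hκα hδ
  have hL : ((K : ℝ) + 2) * γ = 1 + δ := by linarith
  have hδ0 : 0 ≤ δ := by rw [hδ, sub_nonneg, le_mul_inv_iff₀ hα0, one_mul]; exact hακ
  have hδγ : δ ≤ γ := by
    have : ((K : ℝ) + 1) * γ ≤ 1 := by rw [mul_inv_le_iff₀ hα0, one_mul]; linarith
    linarith
  have hγ0 : 0 ≤ γ := inv_nonneg.2 hα0.le
  have hγ1 : γ < 1 := inv_lt_one_of_one_lt₀ hα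
  have hperiod := psiConv_succ_eq hγ0 hγ1 (K + 1) (by push_cast; linarith)
  simp only [show K + 2 - 1 = K + 1 from rfl, show K + 2 - 2 = K from rfl]
  refine ⟨fun x => ?_, ?_⟩
  · rw [hperiod]
    exact boxConv.le_add_shift_one hγ0 hL hδ0 hδγ (Int.fract_nonneg x)
      (Int.fract_lt_one x).le
  · rw [hperiod, Int.fract_eq_self.2 ⟨by linarith, by linarith⟩,
      boxConv.add_shift_one_eq hγ0 hL hδγ (by linarith) (by linarith)]
    rw [sub_half, ← two_mul, div_pow, pow_succ (2 : ℝ) K]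
    field_simp

theorem statement19 (α : ℝ) (hα : 1 < α) (hirr : Irrational α)
    (κ : ℕ) (hκ : κ = ⌈α⌉₊) :
    (∀ x : ℝ,
      ((κ : ℝ) * α⁻¹ - 1) ^ (κ - 1) / (2 ^ (κ - 2) * (Nat.factorial (κ - 1) : ℝ)) ≤
        psiConv α⁻¹ κ x) ∧
    psiConv α⁻¹ κ (((κ : ℝ) * α⁻¹ - 1) / 2) =
      ((κ : ℝ) * α⁻¹ - 1) ^ (κ - 1) / (2 ^ (κ - 2) * (Nat.factorial (κ - 1) : ℝ)) :=
  statement19_general α hα κ hκ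

end
end
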